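/- arXiv:1909.02281 — 2 statements merged into one kernel-verified Lean document; each statement's English description precedes it below -/
import Mathlib

section
/- Let X be a Banach lattice with order continuous norm, and let S and T be convex C₀-semigroups on X with generators A and B, respectively. Suppose B ⊂ A, i.e., D(B) ⊆ D(A) and Ax = Bx for all x ∈ D(B), and suppose D(B) is dense in X. Then S(t)x = T(t)x for all t ≥ 0 and all x ∈ X. -/
/-!
Fix `x ∈ D(B)` and `t ≥ 0`. The map `σ ↦ S(t - σ) T(σ) x` is continuous on `[0, t]`, and writing
`z = T(σ) x ∈ D(B) ⊆ D(A)`, local Lipschitz continuity of `S(t - σ - h)` near `z` bounds its right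
difference quotient at `σ` by a multiple of `‖(T(h) z - S(h) z) / h‖ → ‖Bz - Az‖ = 0`. Hence it is
constant, `S(t) x = T(t) x` on the dense set `D(B)`, and continuity of `S(t)` and `T(t)` concludes.

Three facts replace linearity. A convex operator on a Banach lattice that is bounded on a ball is
Lipschitz on a smaller ball: convexity gives one-sided order estimates, which the solid norm turns
into norm estimates. Baire's theorem, applied to the closed sets on which `S(h)` stays close to the
identity for all small `h`, together with convexity, makes `S(h)` locally bounded, hence locally
Lipschitz, uniformly in small `h`; this yields joint continuity of `(t, x) ↦ S(t) x`. Finally, the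
difference quotients of the convex operator `T(σ)` are monotone in the step, so order continuity of
the norm makes them converge, and `T(σ)` maps `D(B)` into itself.
-/

open Filter Topology Set

variable {X : Type*} [NormedAddCommGroup X] [Lattice X] [HasSolidNorm X]
    [IsOrderedAddMonoid X] [NormedSpace ℝ X] [CompleteSpace X]

def genDom (S : ℝ → X → X) : Set X :=
  {x : X | ∃ z : X, Tendsto (fun h : ℝ => h⁻¹ • (S h x - x)) (𝓝[>] (0 : ℝ)) (𝓝 z)}

open Metric
open scoped NNReal

structure HasOrderContinuousNorm (E : Type*) [NormedAddCommGroup E] [Lattice E] : Prop where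
  exists_isLUB : ∀ f : ℕ → E, BddAbove (range f) → ∃ s : E, IsLUB (range f) s
  tendsto_norm : ∀ f : ℕ → E, Antitone f → IsGLB (range f) 0 →
    Tendsto (fun n => ‖f n‖) atTop (𝓝 0)

section NormedLattice

variable {E : Type*} [NormedAddCommGroup E] [Lattice E] [IsOrderedAddMonoid E]

lemma norm_le_norm_add_norm_of_le_of_neg_le [HasSolidNorm E] {a u v : E} (hu : a ≤ u)
    (hv : -a ≤ v) : ‖a‖ ≤ ‖u‖ + ‖v‖ := by
  have habs : |a| ≤ |(|u| + |v|)| := by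
    rw [abs_of_nonneg (add_nonneg (abs_nonneg u) (abs_nonneg v))]
    exact abs_le'.2 ⟨hu.trans ((le_abs_self u).trans (le_add_of_nonneg_right (abs_nonneg v))),
      hv.trans ((le_abs_self v).trans (le_add_of_nonneg_left (abs_nonneg u)))⟩
  calc ‖a‖ ≤ ‖|u| + |v|‖ := norm_le_norm_of_abs_le_abs habs
    _ ≤ ‖|u|‖ + ‖|v|‖ := norm_add_le _ _
    _ = ‖u‖ + ‖v‖ := by rw [norm_abs_eq_norm, norm_abs_eq_norm]

lemma norm_le_norm_of_nonneg_of_le [HasSolidNorm E] {a b : E} (ha : 0 ≤ a) (hab : a ≤ b) :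
    ‖a‖ ≤ ‖b‖ :=
  norm_le_norm_of_abs_le_abs (by rwa [abs_of_nonneg ha, abs_of_nonneg (ha.trans hab)])

namespace HasOrderContinuousNorm

lemma exists_isGLB_tendsto_of_antitone (hE : HasOrderContinuousNorm E) {g : ℕ → E}
    (hg : Antitone g) (hbdd : BddBelow (range g)) :
    ∃ d, IsGLB (range g) d ∧ Tendsto g atTop (𝓝 d) := by
  obtain ⟨s, hs⟩ := hE.exists_isLUB (fun n => -g n) (by simpa [← neg_range] using hbdd.neg)
  rw [← neg_range, isLUB_neg] at hs
  refine ⟨-s, hs, tendsto_iff_norm_sub_tendsto_zero.2 <| hE.tendsto_norm _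
    (fun m n hmn => sub_le_sub_right (hg hmn) _) ⟨?_, fun w hw => ?_⟩⟩
  · exact forall_mem_range.2 fun n => sub_nonneg.2 (hs.1 (mem_range_self n))
  · have : w + -s ≤ -s := hs.2 <| forall_mem_range.2 fun n =>
      le_sub_iff_add_le.1 (hw (mem_range_self n))
    simpa using this

lemma exists_tendsto_nhdsGT_of_monotoneOn [HasSolidNorm E] (hE : HasOrderContinuousNorm E)
    {q : ℝ → E} (hq : MonotoneOn q (Ioi 0)) (hbdd : BddBelow (q '' Ioi 0)) :
    ∃ d, Tendsto q (𝓝[>] 0) (𝓝 d) := by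
  have hpos : ∀ n : ℕ, (0 : ℝ) < 1 / (n + 1) := fun n => by positivity
  obtain ⟨d, hd, hlim⟩ := hE.exists_isGLB_tendsto_of_antitone (g := fun n => q (1 / (n + 1)))
    (fun m n hmn => hq (hpos n) (hpos m) (by gcongr))
    (hbdd.mono (range_subset_iff.2 fun n => mem_image_of_mem q (hpos n)))
  have hdq : ∀ h > 0, d ≤ q h := fun h hh => by
    obtain ⟨n, hn⟩ := exists_nat_one_div_lt hh
    exact (hd.1 (mem_range_self n)).trans (hq (hpos n) hh hn.le)
  refine ⟨d, Metric.tendsto_nhdsWithin_nhds.2 fun ε hε => ?_⟩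
  obtain ⟨n, hn⟩ := Metric.tendsto_atTop.1 hlim ε hε
  replace hn := hn n le_rfl
  refine ⟨1 / (n + 1), hpos n, fun h hh hhn => ?_⟩
  have hh : 0 < h := hh
  rw [Real.dist_eq, sub_zero, abs_of_pos hh] at hhn
  rw [dist_eq_norm] at hn ⊢
  exact (norm_le_norm_of_nonneg_of_le (sub_nonneg.2 (hdq h hh))
    (sub_le_sub_right (hq hh (hpos n) hhn.le) d)).trans_lt hn

end HasOrderContinuousNorm

end NormedLattice

section ConvexOperator

variable {E : Type*} [NormedAddCommGroup E] [Lattice E] [IsOrderedAddMonoid E]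
  [NormedSpace ℝ E] {f : E → E}

lemma ConvexOn.sub_le_smul_sub {s : Set E} (hf : ConvexOn ℝ s f) {p y : E} (hp : p ∈ s)
    (hy : y ∈ s) {a : ℝ} (ha₀ : 0 ≤ a) (ha₁ : a ≤ 1) :
    f (a • p + (1 - a) • y) - f y ≤ a • (f p - f y) :=
  calc f (a • p + (1 - a) • y) - f y ≤ a • f p + (1 - a) • f y - f y :=
        sub_le_sub_right (hf.2 hp hy ha₀ (sub_nonneg.2 ha₁) (add_sub_cancel a 1)) _
    _ = a • (f p - f y) := by module

lemma ConvexOn.exists_sub_le_of_norm_le {c : E} {ρ M : ℝ} (hρ : 0 < ρ)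
    (hf : ConvexOn ℝ (closedBall c ρ) f) (hM : ∀ w ∈ closedBall c ρ, ‖f w‖ ≤ M)
    {x y : E} (hx : x ∈ closedBall c (ρ / 4)) (hy : y ∈ closedBall c (ρ / 4)) :
    ∃ q, f x - f y ≤ q ∧ ‖q‖ ≤ 4 * M / ρ * ‖x - y‖ := by
  rcases eq_or_ne x y with rfl | hxy
  · exact ⟨0, by simp, by simp⟩
  rw [mem_closedBall] at hx hy
  have hd : 0 < ‖x - y‖ := norm_pos_iff.2 (sub_ne_zero.2 hxy)
  have hd_le : ‖x - y‖ ≤ ρ / 2 := by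
    rw [← dist_eq_norm]; linarith [dist_triangle_right x y c]
  -- `x` lies on the segment from `y` to the point `p` at distance `ρ / 2` from `y`
  set a := 2 * ‖x - y‖ / ρ with ha
  have ha₀ : 0 < a := by positivity
  have ha₁ : a ≤ 1 := by rw [div_le_one hρ]; linarith
  set p := y + a⁻¹ • (x - y) with hp
  have hyc : y ∈ closedBall c ρ := mem_closedBall.2 (by linarith)
  have hpc : p ∈ closedBall c ρ := by
    have : ‖a⁻¹ • (x - y)‖ = ρ / 2 := by
      rw [norm_smul, Real.norm_of_nonneg (inv_nonneg.2 ha₀.le), ha]; field_simp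
    rw [mem_closedBall, dist_eq_norm]
    calc ‖p - c‖ = ‖(y - c) + a⁻¹ • (x - y)‖ := by rw [hp]; abel_nf
      _ ≤ ‖y - c‖ + ‖a⁻¹ • (x - y)‖ := norm_add_le _ _
      _ ≤ ρ := by rw [← dist_eq_norm]; linarith
  have hxp : a • p + (1 - a) • y = x := by
    rw [smul_add, smul_smul, mul_inv_cancel₀ ha₀.ne', one_smul]; module
  refine ⟨a • (f p - f y), hxp ▸ hf.sub_le_smul_sub hpc hyc ha₀.le ha₁, ?_⟩
  calc ‖a • (f p - f y)‖ = a * ‖f p - f y‖ := by rw [norm_smul, Real.norm_of_nonneg ha₀.le]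
    _ ≤ a * (M + M) := by
        gcongr; exact (norm_sub_le _ _).trans (add_le_add (hM p hpc) (hM y hyc))
    _ = 4 * M / ρ * ‖x - y‖ := by ring

lemma ConvexOn.lipschitzOnWith_of_norm_le [HasSolidNorm E] {c : E} {ρ M : ℝ} (hρ : 0 < ρ)
    (hf : ConvexOn ℝ (closedBall c ρ) f) (hM : ∀ w ∈ closedBall c ρ, ‖f w‖ ≤ M) :
    LipschitzOnWith (8 * M / ρ).toNNReal f (closedBall c (ρ / 4)) := by
  refine LipschitzOnWith.of_dist_le_mul fun x hx y hy => ?_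
  obtain ⟨q, hq, hqn⟩ := hf.exists_sub_le_of_norm_le hρ hM hx hy
  obtain ⟨q', hq', hq'n⟩ := hf.exists_sub_le_of_norm_le hρ hM hy hx
  rw [norm_sub_rev y x] at hq'n
  rw [dist_eq_norm, dist_eq_norm]
  calc ‖f x - f y‖ ≤ ‖q‖ + ‖q'‖ := norm_le_norm_add_norm_of_le_of_neg_le hq (by rwa [neg_sub])
    _ ≤ 4 * M / ρ * ‖x - y‖ + 4 * M / ρ * ‖x - y‖ := add_le_add hqn hq'n
    _ = 8 * M / ρ * ‖x - y‖ := by ring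
    _ ≤ _ := by gcongr; exact Real.le_coe_toNNReal _

lemma ConvexOn.norm_le_of_le [HasSolidNorm E] [PosSMulMono ℝ E] (hf : ConvexOn ℝ univ f)
    {z w u v : E} (hu : f w ≤ u) (hv : f ((2 : ℝ) • z - w) ≤ v) :
    ‖f w‖ ≤ ‖u‖ + ‖v‖ + 2 * ‖f z‖ := by
  have hmid : (2 : ℝ) • f z ≤ f w + f ((2 : ℝ) • z - w) := by
    have h := hf.2 (mem_univ w) (mem_univ ((2 : ℝ) • z - w)) (by norm_num : (0 : ℝ) ≤ 1 / 2)
      (by norm_num : (0 : ℝ) ≤ 1 / 2) (by norm_num)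
    have hz : (1 / 2 : ℝ) • w + (1 / 2 : ℝ) • ((2 : ℝ) • z - w) = z := by module
    rw [hz] at h
    calc (2 : ℝ) • f z ≤ (2 : ℝ) • ((1 / 2 : ℝ) • f w + (1 / 2 : ℝ) • f ((2 : ℝ) • z - w)) :=
          smul_le_smul_of_nonneg_left h (by norm_num)
      _ = _ := by module
  have hneg : -f w ≤ v - (2 : ℝ) • f z := by
    calc -f w ≤ f ((2 : ℝ) • z - w) - (2 : ℝ) • f z := by
          rw [neg_le_sub_iff_le_add]; rwa [add_comm]
      _ ≤ _ := sub_le_sub_right hv _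
  calc ‖f w‖ ≤ ‖u‖ + ‖v - (2 : ℝ) • f z‖ := norm_le_norm_add_norm_of_le_of_neg_le hu hneg
    _ ≤ ‖u‖ + (‖v‖ + 2 * ‖f z‖) := by
        gcongr; exact (norm_sub_le _ _).trans_eq (by rw [norm_smul, Real.norm_two])
    _ = _ := by ring

lemma ConvexOn.monotoneOn_slope [PosSMulMono ℝ E] (hf : ConvexOn ℝ univ f) (x v : E) :
    MonotoneOn (fun h : ℝ => h⁻¹ • (f (x + h • v) - f x)) (Ioi 0) := by
  intro h (hh : 0 < h) h' (hh' : 0 < h') hle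
  have key := hf.sub_le_smul_sub (mem_univ (x + h' • v)) (mem_univ x)
    (div_nonneg hh.le hh'.le) (div_le_one_of_le₀ hle hh'.le)
  rw [show (h / h') • (x + h' • v) + (1 - h / h') • x = x + h • v by
    rw [smul_add, smul_smul, div_mul_cancel₀ _ hh'.ne']; module] at key
  calc h⁻¹ • (f (x + h • v) - f x) ≤ h⁻¹ • ((h / h') • (f (x + h' • v) - f x)) :=
        smul_le_smul_of_nonneg_left key (inv_nonneg.2 hh.le)
    _ = h'⁻¹ • (f (x + h' • v) - f x) := by
        rw [smul_smul, inv_mul_eq_div, div_div_cancel_left' hh.ne']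

lemma ConvexOn.sub_le_slope [PosSMulMono ℝ E] (hf : ConvexOn ℝ univ f) (x v : E) {h : ℝ}
    (hh : 0 < h) : f x - f (x - v) ≤ h⁻¹ • (f (x + h • v) - f x) := by
  have key := hf.sub_le_smul_sub (mem_univ (x + h • v)) (mem_univ (x - v))
    (inv_nonneg.2 (by linarith : (0 : ℝ) ≤ 1 + h)) (inv_le_one_of_one_le₀ (by linarith))
  rw [show (1 + h)⁻¹ • (x + h • v) + (1 - (1 + h)⁻¹) • (x - v) = x by
    match_scalars <;> field_simp <;> ring] at key
  have h1 : (1 + h) • (f x - f (x - v)) ≤ f (x + h • v) - f (x - v) := by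
    have := smul_le_smul_of_nonneg_left key (by linarith : (0:ℝ) ≤ 1 + h)
    rwa [smul_inv_smul₀ (by linarith : (1 + h) ≠ 0)] at this
  have h2 : h • (f x - f (x - v)) ≤ f (x + h • v) - f x := by
    have := sub_le_sub_right h1 (f x - f (x - v))
    convert this using 1 <;> module
  calc f x - f (x - v) = h⁻¹ • h • (f x - f (x - v)) := (inv_smul_smul₀ hh.ne' _).symm
    _ ≤ _ := smul_le_smul_of_nonneg_left h2 (inv_nonneg.2 hh.le)

lemma ConvexOn.exists_tendsto_slope [HasSolidNorm E] [PosSMulMono ℝ E]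
    (hE : HasOrderContinuousNorm E) (hf : ConvexOn ℝ univ f) (x v : E) :
    ∃ d, Tendsto (fun h : ℝ => h⁻¹ • (f (x + h • v) - f x)) (𝓝[>] 0) (𝓝 d) :=
  hE.exists_tendsto_nhdsGT_of_monotoneOn (hf.monotoneOn_slope x v)
    ⟨f x - f (x - v), forall_mem_image.2 fun _ hh => hf.sub_le_slope x v hh⟩

lemma ConvexOn.norm_le_of_norm_le_on_closedBall [HasSolidNorm E] [PosSMulMono ℝ E]
    (hf : ConvexOn ℝ univ f) {x z w : E} {ε M : ℝ}
    (hM : ∀ y ∈ closedBall x ε, ‖f y‖ ≤ M) (hw : w ∈ closedBall z (ε / 2)) :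
    ‖f w‖ ≤ M + ‖f ((2 : ℝ) • z - x)‖ + 2 * ‖f z‖ := by
  set p := (2 : ℝ) • z - x with hp
  have hmem : ∀ w' ∈ closedBall z (ε / 2), (2 : ℝ) • w' - p ∈ closedBall x ε := by
    intro w' hw'
    rw [mem_closedBall, dist_eq_norm] at hw' ⊢
    rw [show (2 : ℝ) • w' - p - x = (2 : ℝ) • (w' - z) by rw [hp]; module, norm_smul,
      Real.norm_two]
    linarith
  have hupper : ∀ w' ∈ closedBall z (ε / 2),
      f w' ≤ (1 / 2 : ℝ) • f p + (1 / 2 : ℝ) • f ((2 : ℝ) • w' - p) ∧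
      ‖(1 / 2 : ℝ) • f p + (1 / 2 : ℝ) • f ((2 : ℝ) • w' - p)‖ ≤ (‖f p‖ + M) / 2 := by
    intro w' hw'
    refine ⟨?_, ?_⟩
    · have h := hf.2 (mem_univ p) (mem_univ ((2 : ℝ) • w' - p)) (by norm_num : (0 : ℝ) ≤ 1 / 2)
        (by norm_num : (0 : ℝ) ≤ 1 / 2) (by norm_num)
      rwa [show (1 / 2 : ℝ) • p + (1 / 2 : ℝ) • ((2 : ℝ) • w' - p) = w' by module] at h
    · calc _ ≤ ‖(1 / 2 : ℝ) • f p‖ + ‖(1 / 2 : ℝ) • f ((2 : ℝ) • w' - p)‖ := norm_add_le _ _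
        _ ≤ (‖f p‖ + M) / 2 := by
          rw [norm_smul, norm_smul, Real.norm_of_nonneg (by norm_num : (0 : ℝ) ≤ 1 / 2)]
          linarith [hM _ (hmem w' hw')]
  have hw' : (2 : ℝ) • z - w ∈ closedBall z (ε / 2) := by
    rw [mem_closedBall, dist_eq_norm, show (2 : ℝ) • z - w - z = -(w - z) by module,
      norm_neg, ← dist_eq_norm]
    exact hw
  obtain ⟨h₁, h₁'⟩ := hupper w hw
  obtain ⟨h₂, h₂'⟩ := hupper _ hw'
  linarith [hf.norm_le_of_le h₁ h₂]

end ConvexOperator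

lemma continuousWithinAt_uncurry_of_lipschitzOnWith {α E F : Type*} [TopologicalSpace α]
    [PseudoMetricSpace E] [PseudoMetricSpace F] {f : α → E → F} {s : Set α} {a : α} {z : E}
    {L : ℝ≥0} {ε : ℝ} (hε : 0 < ε)
    (hL : ∀ᶠ r in 𝓝[s] a, LipschitzOnWith L (f r) (closedBall z ε))
    (hz : ContinuousWithinAt (fun r => f r z) s a) :
    ContinuousWithinAt (Function.uncurry f) (s ×ˢ univ) (a, z) := by
  rw [ContinuousWithinAt, nhdsWithin_prod_eq, nhdsWithin_univ, Function.uncurry_apply_pair]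
  have hlim : Tendsto (fun p : α × E => L * dist p.2 z + dist (f p.1 z) (f a z))
      (𝓝[s] a ×ˢ 𝓝 z) (𝓝 0) := by
    have h₁ : Tendsto (fun p : α × E => dist p.2 z) (𝓝[s] a ×ˢ 𝓝 z) (𝓝 0) := by
      have h : Tendsto (fun p : α × E => p.2) (𝓝[s] a ×ˢ 𝓝 z) (𝓝 z) := tendsto_snd
      simpa using h.dist (tendsto_const_nhds (x := z))
    have h₂ : Tendsto (fun p : α × E => dist (f p.1 z) (f a z)) (𝓝[s] a ×ˢ 𝓝 z) (𝓝 0) :=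
      (tendsto_iff_dist_tendsto_zero.1 hz).comp tendsto_fst
    simpa using (h₁.const_mul (L : ℝ)).add h₂
  refine tendsto_iff_dist_tendsto_zero.2
    (squeeze_zero' (Eventually.of_forall fun _ => dist_nonneg) ?_ hlim)
  filter_upwards [hL.prod_mk (closedBall_mem_nhds z hε)] with ⟨r, w⟩ ⟨hLr, hw⟩
  exact (dist_triangle _ (f r z) _).trans
    (by gcongr; exact hLr.dist_le_mul _ hw _ (mem_closedBall_self hε.le))

lemma tendsto_inv_smul_sub_of_lipschitzOnWith {E F : Type*} [NormedAddCommGroup E]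
    [NormedSpace ℝ E] [NormedAddCommGroup F] [NormedSpace ℝ F] {g : E → F} {u : ℝ → E} {x v : E}
    {L : ℝ≥0} {r : ℝ} (hr : 0 < r) (hg : LipschitzOnWith L g (closedBall x r))
    (hux : Tendsto u (𝓝[>] 0) (𝓝 x)) (hu : Tendsto (fun h => h⁻¹ • (u h - x)) (𝓝[>] 0) (𝓝 v)) :
    Tendsto (fun h : ℝ => h⁻¹ • (g (u h) - g (x + h • v))) (𝓝[>] 0) (𝓝 0) := by
  have hball₁ : ∀ᶠ h in 𝓝[>] (0 : ℝ), u h ∈ closedBall x r := hux (closedBall_mem_nhds x hr)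
  have hball₂ : ∀ᶠ h in 𝓝[>] (0 : ℝ), x + h • v ∈ closedBall x r :=
    (((continuous_const.add (continuous_id.smul continuous_const)).tendsto' 0 x (by simp)).mono_left
      nhdsWithin_le_nhds) (closedBall_mem_nhds x hr)
  refine squeeze_zero_norm' ?_
    (by simpa using (tendsto_iff_norm_sub_tendsto_zero.1 hu).const_mul (L : ℝ))
  filter_upwards [hball₁, hball₂, self_mem_nhdsWithin] with h h₁ h₂ (hh : 0 < h)
  have hdiff : h⁻¹ • (u h - x) - v = h⁻¹ • (u h - (x + h • v)) := by
    rw [smul_sub h⁻¹ (u h) (x + h • v), smul_add, inv_smul_smul₀ hh.ne', smul_sub]; abel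
  rw [norm_smul, hdiff, norm_smul, mul_left_comm]
  gcongr
  simpa only [dist_eq_norm] using hg.dist_le_mul _ h₁ _ h₂

structure IsConvexC0Semigroup {E : Type*} [NormedAddCommGroup E] [Lattice E] [NormedSpace ℝ E]
    (S : ℝ → E → E) : Prop where
  le_convexComb : ∀ t : ℝ, 0 ≤ t → ∀ x y : E, ∀ a : ℝ, 0 ≤ a → a ≤ 1 →
    S t (a • x + (1 - a) • y) ≤ a • S t x + (1 - a) • S t y
  bddOn_ball : ∀ t : ℝ, 0 ≤ t → ∀ r : ℝ, 0 < r → ∃ M : ℝ, ∀ x : E, ‖x‖ ≤ r → ‖S t x‖ ≤ M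
  map_zero : ∀ x : E, S 0 x = x
  map_add : ∀ s t : ℝ, 0 ≤ s → 0 ≤ t → ∀ x : E, S (t + s) x = S t (S s x)
  tendsto_nhdsGT_zero : ∀ x : E, Tendsto (fun t : ℝ => S t x) (𝓝[>] (0 : ℝ)) (𝓝 x)

namespace IsConvexC0Semigroup

variable {E : Type*} [NormedAddCommGroup E] [Lattice E] [NormedSpace ℝ E] {S T : ℝ → E → E}

lemma convexOn (hS : IsConvexC0Semigroup S) {t : ℝ} (ht : 0 ≤ t) : ConvexOn ℝ univ (S t) :=
  ⟨convex_univ, fun x _ y _ a b ha hb hab => by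
    obtain rfl : b = 1 - a := eq_sub_of_add_eq' hab
    exact hS.le_convexComb t ht x y a ha (sub_nonneg.1 hb)⟩

lemma tendsto_nhdsGE_zero (hS : IsConvexC0Semigroup S) (x : E) :
    Tendsto (fun t => S t x) (𝓝[≥] 0) (𝓝 x) := by
  have h : ContinuousWithinAt (fun t => S t x) (Ioi 0) 0 := by
    simpa only [ContinuousWithinAt, hS.map_zero] using hS.tendsto_nhdsGT_zero x
  simpa only [ContinuousWithinAt, hS.map_zero] using continuousWithinAt_Ioi_iff_Ici.1 h

lemma exists_forall_Icc_mem_closedBall (hS : IsConvexC0Semigroup S) (x : E) {ε : ℝ}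
    (hε : 0 < ε) : ∃ δ > 0, ∀ t ∈ Icc 0 δ, S t x ∈ closedBall x ε :=
  mem_nhdsGE_iff_exists_Icc_subset.1 (hS.tendsto_nhdsGE_zero x (closedBall_mem_nhds x hε))

variable [HasSolidNorm E] [IsOrderedAddMonoid E]

lemma lipschitzOnWith_closedBall (hS : IsConvexC0Semigroup S) {t : ℝ} (ht : 0 ≤ t) (z : E)
    {r : ℝ} (hr : 0 < r) : ∃ L, LipschitzOnWith L (S t) (closedBall z r) := by
  have hR : 0 < ‖z‖ + r := by positivity
  obtain ⟨M, hM⟩ := hS.bddOn_ball t ht (4 * (‖z‖ + r)) (by positivity)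
  have hL := ((hS.convexOn ht).subset (subset_univ _)
    (convex_closedBall 0 _)).lipschitzOnWith_of_norm_le (by positivity)
      fun w hw => hM w (mem_closedBall_zero_iff.1 hw)
  rw [mul_div_cancel_left₀ _ four_ne_zero] at hL
  exact ⟨_, hL.mono (closedBall_subset_closedBall' (by rw [dist_zero_right, add_comm]))⟩

lemma continuous (hS : IsConvexC0Semigroup S) {t : ℝ} (ht : 0 ≤ t) : Continuous (S t) :=
  continuous_iff_continuousAt.2 fun x =>
    let ⟨_, hL⟩ := hS.lipschitzOnWith_closedBall ht x one_pos
    hL.continuousOn.continuousAt (closedBall_mem_nhds x one_pos)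

lemma mapsTo_genDom [PosSMulMono ℝ E] (hS : IsConvexC0Semigroup S)
    (hE : HasOrderContinuousNorm E) {s : ℝ} (hs : 0 ≤ s) : MapsTo (S s) (genDom S) (genDom S) := by
  rintro x ⟨v, hv⟩
  obtain ⟨d, hd⟩ := (hS.convexOn hs).exists_tendsto_slope hE x v
  obtain ⟨L, hL⟩ := hS.lipschitzOnWith_closedBall hs x one_pos
  have hsum := (tendsto_inv_smul_sub_of_lipschitzOnWith one_pos hL
    (hS.tendsto_nhdsGT_zero x) hv).add hd
  rw [zero_add] at hsum
  refine ⟨d, hsum.congr' ?_⟩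
  filter_upwards [self_mem_nhdsWithin] with h (hh : 0 < h)
  rw [← smul_add, sub_add_sub_cancel, ← hS.map_add h s hh.le hs, ← hS.map_add s h hs hh.le,
    add_comm]

lemma exists_closedBall_forall_Icc_mem_closedBall [CompleteSpace E] (hS : IsConvexC0Semigroup S) :
    ∃ x : E, ∃ ε > 0, ∃ δ > 0, ∀ t ∈ Icc 0 δ, ∀ w ∈ closedBall x ε, S t w ∈ closedBall w 1 := by
  set F : ℕ → Set E := fun n => ⋂ t ∈ Icc (0 : ℝ) (1 / (n + 1)), {w | dist (S t w) w ≤ 1}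
  have hclosed : ∀ n, IsClosed (F n) := fun n => isClosed_biInter fun t ht =>
    isClosed_le ((hS.continuous ht.1).dist continuous_id) continuous_const
  have hcover : ⋃ n, F n = univ := eq_univ_of_forall fun w => by
    obtain ⟨δ, hδ, hw⟩ := hS.exists_forall_Icc_mem_closedBall w one_pos
    obtain ⟨n, hn⟩ := exists_nat_one_div_lt hδ
    exact mem_iUnion.2 ⟨n, mem_iInter₂.2 fun t ht => hw t ⟨ht.1, ht.2.trans hn.le⟩⟩
  obtain ⟨n, x, hx⟩ := nonempty_interior_of_iUnion_of_closed hclosed hcover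
  obtain ⟨ε, hε, hεF⟩ := nhds_basis_closedBall.mem_iff.1 (isOpen_interior.mem_nhds hx)
  exact ⟨x, ε, hε, 1 / (n + 1), by positivity,
    fun t ht w hw => mem_iInter₂.1 (interior_subset (hεF hw)) t ht⟩

variable [CompleteSpace E] [PosSMulMono ℝ E]

lemma exists_forall_Icc_norm_le (hS : IsConvexC0Semigroup S) (z : E) :
    ∃ ε > 0, ∃ δ > 0, ∃ C > 0, ∀ t ∈ Icc 0 δ, ∀ w ∈ closedBall z ε, ‖S t w‖ ≤ C := by
  obtain ⟨x, ε, hε, δ₁, hδ₁, hx⟩ := hS.exists_closedBall_forall_Icc_mem_closedBall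
  obtain ⟨δ₂, hδ₂, hp⟩ := hS.exists_forall_Icc_mem_closedBall ((2 : ℝ) • z - x) one_pos
  obtain ⟨δ₃, hδ₃, hz⟩ := hS.exists_forall_Icc_mem_closedBall z one_pos
  refine ⟨ε / 2, by positivity, min δ₁ (min δ₂ δ₃), by positivity,
    (‖x‖ + ε + 1) + (‖(2 : ℝ) • z - x‖ + 1) + 2 * (‖z‖ + 1), by positivity, fun t ht w hw => ?_⟩
  have ht₁ : t ∈ Icc 0 δ₁ := ⟨ht.1, ht.2.trans (min_le_left _ _)⟩
  have ht₂ : t ∈ Icc 0 δ₂ := ⟨ht.1, ht.2.trans ((min_le_right _ _).trans (min_le_left _ _))⟩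
  have ht₃ : t ∈ Icc 0 δ₃ := ⟨ht.1, ht.2.trans ((min_le_right _ _).trans (min_le_right _ _))⟩
  have hbound : ∀ y ∈ closedBall x ε, ‖S t y‖ ≤ ‖x‖ + ε + 1 := fun y hy =>
    (norm_le_of_mem_closedBall (hx t ht₁ y hy)).trans
      (by linarith [norm_le_of_mem_closedBall hy])
  have := (hS.convexOn ht.1).norm_le_of_norm_le_on_closedBall hbound hw
  linarith [norm_le_of_mem_closedBall (hp t ht₂), norm_le_of_mem_closedBall (hz t ht₃)]

lemma exists_forall_Icc_lipschitzOnWith (hS : IsConvexC0Semigroup S) (z : E) :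
    ∃ ε > 0, ∃ δ > 0, ∃ L, ∃ C > 0, ∀ t ∈ Icc 0 δ,
      LipschitzOnWith L (S t) (closedBall z ε) ∧
        MapsTo (S t) (closedBall z ε) (closedBall 0 C) := by
  obtain ⟨ε, hε, δ, hδ, C, hC, hbound⟩ := hS.exists_forall_Icc_norm_le z
  refine ⟨ε / 4, by positivity, δ, hδ, _, C, hC, fun t ht =>
    ⟨((hS.convexOn ht.1).subset (subset_univ _) (convex_closedBall z ε)).lipschitzOnWith_of_norm_le
      hε (hbound t ht), fun w hw => mem_closedBall_zero_iff.2
        (hbound t ht w (closedBall_subset_closedBall (by linarith) hw))⟩⟩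

lemma exists_eventually_lipschitzOnWith (hS : IsConvexC0Semigroup S) (r₀ : ℝ) (z : E) :
    ∃ L, ∃ ε > 0, ∀ᶠ r in 𝓝[Ici 0] r₀, LipschitzOnWith L (S r) (closedBall z ε) := by
  obtain ⟨ε, hε, δ, hδ, L, C, hC, hsmall⟩ := hS.exists_forall_Icc_lipschitzOnWith z
  set a := max 0 (r₀ - δ / 2)
  have ha : 0 ≤ a := le_max_left _ _
  obtain ⟨L', hL'⟩ := hS.lipschitzOnWith_closedBall ha 0 hC
  have hnhds : Icc a (a + δ) ∈ 𝓝[Ici 0] r₀ :=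
    mem_nhdsWithin.2 ⟨Ioo (r₀ - δ / 2) (r₀ + δ / 2), isOpen_Ioo, ⟨by linarith, by linarith⟩,
      fun r ⟨⟨h₁, h₂⟩, (h₃ : 0 ≤ r)⟩ =>
        ⟨max_le h₃ h₁.le, by linarith [le_max_right 0 (r₀ - δ / 2)]⟩⟩
  refine ⟨L' * L, ε, hε, eventually_of_mem hnhds fun r hr => ?_⟩
  have hra : S r = S a ∘ S (r - a) := funext fun w => by
    rw [Function.comp_apply, ← hS.map_add (r - a) a (sub_nonneg.2 hr.1) ha, add_sub_cancel]
  obtain ⟨hLip, hmaps⟩ := hsmall (r - a) ⟨sub_nonneg.2 hr.1, by linarith [hr.2]⟩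
  rw [hra]
  exact hL'.comp hLip hmaps

lemma continuousOn_orbit (hS : IsConvexC0Semigroup S) (x : E) :
    ContinuousOn (fun r => S r x) (Ici 0) := by
  intro r₀ (hr₀ : 0 ≤ r₀)
  obtain ⟨L, ε, hε, hL⟩ := hS.exists_eventually_lipschitzOnWith r₀ x
  -- with `m = min r r₀`, both `S r x` and `S r₀ x` are images under `S m` of points near `x`
  have hmin : Tendsto (fun r => min r r₀) (𝓝[Ici 0] r₀) (𝓝[Ici 0] r₀) :=
    tendsto_nhdsWithin_of_tendsto_nhds_of_eventually_within _
      (((continuous_id.min continuous_const).tendsto' r₀ r₀ (min_self r₀)).mono_left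
        nhdsWithin_le_nhds)
      (eventually_nhdsWithin_of_forall fun r (hr : 0 ≤ r) => le_min hr hr₀)
  have hgap : ∀ g : ℝ → ℝ, Continuous g → g r₀ = 0 → (∀ r, 0 ≤ g r) →
      Tendsto (fun r => S (g r) x) (𝓝[Ici 0] r₀) (𝓝 x) := fun g hg h₀ hnn =>
    (hS.tendsto_nhdsGE_zero x).comp (tendsto_nhdsWithin_of_tendsto_nhds_of_eventually_within _
      (h₀ ▸ hg.continuousAt.tendsto.mono_left nhdsWithin_le_nhds) (Eventually.of_forall hnn))
  have h₁ := hgap (fun r => r - min r r₀) (by fun_prop) (by simp)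
    fun r => sub_nonneg.2 (min_le_left _ _)
  have h₂ := hgap (fun r => r₀ - min r r₀) (by fun_prop) (by simp)
    fun r => sub_nonneg.2 (min_le_right _ _)
  refine tendsto_iff_dist_tendsto_zero.2 (squeeze_zero' (Eventually.of_forall fun _ => dist_nonneg)
    ?_ (by simpa using (h₁.dist h₂).const_mul (L : ℝ)))
  have hball := closedBall_mem_nhds x hε
  filter_upwards [hmin.eventually hL, h₁ hball, h₂ hball, self_mem_nhdsWithin]
    with r hLr hr₁ hr₂ (hr : 0 ≤ r)
  have hm : 0 ≤ min r r₀ := le_min hr hr₀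
  have hsplit : ∀ r' ≥ min r r₀, S r' x = S (min r r₀) (S (r' - min r r₀) x) := fun r' hr' => by
    rw [← hS.map_add _ _ (sub_nonneg.2 hr') hm, add_sub_cancel]
  rw [hsplit r (min_le_left _ _), hsplit r₀ (min_le_right _ _)]
  exact hLr.dist_le_mul _ hr₁ _ hr₂

lemma continuousOn_uncurry (hS : IsConvexC0Semigroup S) :
    ContinuousOn (Function.uncurry S) (Ici 0 ×ˢ univ) := by
  rintro ⟨r₀, z⟩ ⟨hr₀, -⟩
  obtain ⟨L, ε, hε, hL⟩ := hS.exists_eventually_lipschitzOnWith r₀ z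
  exact continuousWithinAt_uncurry_of_lipschitzOnWith hε hL (hS.continuousOn_orbit z r₀ hr₀)

lemma hasDerivWithinAt_interpolation (hS : IsConvexC0Semigroup S) (hT : IsConvexC0Semigroup T)
    {t s : ℝ} (hs : 0 ≤ s) (hst : s < t) (x : E)
    (hTS : Tendsto (fun h => h⁻¹ • (T h (T s x) - S h (T s x))) (𝓝[>] 0) (𝓝 0)) :
    HasDerivWithinAt (fun σ => S (t - σ) (T σ x)) 0 (Ici s) s := by
  set z := T s x
  obtain ⟨L, ε, hε, hL⟩ := hS.exists_eventually_lipschitzOnWith (t - s) z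
  have hgap : Tendsto (fun y => y - s) (𝓝[>] s) (𝓝[>] 0) :=
    tendsto_nhdsWithin_of_tendsto_nhds_of_eventually_within _
      (by simpa using ((continuous_sub_right s).tendsto s).mono_left nhdsWithin_le_nhds)
      (eventually_nhdsWithin_of_forall fun y (hy : s < y) => sub_pos.2 hy)
  have htime : Tendsto (fun y => t - y) (𝓝[>] s) (𝓝[Ici 0] (t - s)) :=
    tendsto_nhdsWithin_of_tendsto_nhds_of_eventually_within _
      (((continuous_sub_left t).tendsto s).mono_left nhdsWithin_le_nhds)
      (mem_of_superset (Ioo_mem_nhdsGT hst) fun y hy => sub_nonneg.2 hy.2.le)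
  have hball := closedBall_mem_nhds z hε
  refine hasDerivWithinAt_Ioi_iff_Ici.1
    ((hasDerivWithinAt_iff_tendsto_slope' (s := Ioi s) (lt_irrefl s)).2 (squeeze_zero_norm' ?_
      (by simpa using ((hTS.comp hgap).norm).const_mul (L : ℝ))))
  filter_upwards [htime.eventually hL, (hT.tendsto_nhdsGT_zero z).comp hgap hball,
    (hS.tendsto_nhdsGT_zero z).comp hgap hball, Ioo_mem_nhdsGT hst] with y hLy hTy hSy hy
  have hys : 0 ≤ y - s := sub_nonneg.2 hy.1.le
  have hTy' : T y x = T (y - s) z := by rw [← hT.map_add s _ hs hys, sub_add_cancel]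
  have hSy' : S (t - s) z = S (t - y) (S (y - s) z) := by
    rw [← hS.map_add _ _ hys (sub_nonneg.2 hy.2.le), sub_add_sub_cancel]
  rw [slope_def_module]
  change ‖(y - s)⁻¹ • (S (t - y) (T y x) - S (t - s) z)‖ ≤ _
  rw [hTy', hSy', norm_smul, norm_smul, mul_left_comm]
  gcongr
  simpa only [dist_eq_norm, Function.comp_apply] using hLy.dist_le_mul _ hTy _ hSy

end IsConvexC0Semigroup

theorem semigroup_determined_by_generator_general
    [PosSMulStrictMono ℝ X]
    (hDed : ∀ f : ℕ → X, BddAbove (Set.range f) → ∃ s : X, IsLUB (Set.range f) s)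
    (hoc : ∀ f : ℕ → X, Antitone f → IsGLB (Set.range f) 0 →
      Tendsto (fun n => ‖f n‖) atTop (𝓝 (0 : ℝ)))
    (S T : ℝ → X → X)
    (hSconv : ∀ t : ℝ, 0 ≤ t → ∀ x y : X, ∀ a : ℝ, 0 ≤ a → a ≤ 1 →
      S t (a • x + (1 - a) • y) ≤ a • S t x + (1 - a) • S t y)
    (hSbdd : ∀ t : ℝ, 0 ≤ t → ∀ r : ℝ, 0 < r → ∃ M : ℝ, ∀ x : X, ‖x‖ ≤ r → ‖S t x‖ ≤ M)
    (hSid : ∀ x : X, S 0 x = x)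
    (hSsg : ∀ s t : ℝ, 0 ≤ s → 0 ≤ t → ∀ x : X, S (t + s) x = S t (S s x))
    (hSc0 : ∀ x : X, Tendsto (fun t : ℝ => S t x) (𝓝[>] (0 : ℝ)) (𝓝 x))
    (hTconv : ∀ t : ℝ, 0 ≤ t → ∀ x y : X, ∀ a : ℝ, 0 ≤ a → a ≤ 1 →
      T t (a • x + (1 - a) • y) ≤ a • T t x + (1 - a) • T t y)
    (hTbdd : ∀ t : ℝ, 0 ≤ t → ∀ r : ℝ, 0 < r → ∃ M : ℝ, ∀ x : X, ‖x‖ ≤ r → ‖T t x‖ ≤ M)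
    (hTid : ∀ x : X, T 0 x = x)
    (hTsg : ∀ s t : ℝ, 0 ≤ s → 0 ≤ t → ∀ x : X, T (t + s) x = T t (T s x))
    (hTc0 : ∀ x : X, Tendsto (fun t : ℝ => T t x) (𝓝[>] (0 : ℝ)) (𝓝 x))
    (A B : X → X)
    (hA : ∀ x ∈ genDom S, Tendsto (fun h : ℝ => h⁻¹ • (S h x - x)) (𝓝[>] (0 : ℝ)) (𝓝 (A x)))
    (hB : ∀ x ∈ genDom T, Tendsto (fun h : ℝ => h⁻¹ • (T h x - x)) (𝓝[>] (0 : ℝ)) (𝓝 (B x)))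
    (hsub : genDom T ⊆ genDom S)
    (hagree : ∀ x ∈ genDom T, A x = B x)
    (hdense : Dense (genDom T)) :
    ∀ t : ℝ, 0 ≤ t → ∀ x : X, S t x = T t x := by
  have hS : IsConvexC0Semigroup S := ⟨hSconv, hSbdd, hSid, hSsg, hSc0⟩
  have hT : IsConvexC0Semigroup T := ⟨hTconv, hTbdd, hTid, hTsg, hTc0⟩
  have hE : HasOrderContinuousNorm X := ⟨hDed, hoc⟩
  intro t ht
  suffices hD : EqOn (S t) (T t) (genDom T) from
    congrFun (Continuous.ext_on hdense (hS.continuous ht) (hT.continuous ht) hD)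
  intro x hx
  have hcont : ContinuousOn (fun σ => S (t - σ) (T σ x)) (Icc 0 t) :=
    hS.continuousOn_uncurry.comp ((continuousOn_const.sub continuousOn_id).prodMk
      ((hT.continuousOn_orbit x).mono Icc_subset_Ici_self)) fun σ hσ => ⟨sub_nonneg.2 hσ.2, trivial⟩
  have hderiv : ∀ σ ∈ Ico 0 t, HasDerivWithinAt (fun σ => S (t - σ) (T σ x)) 0 (Ici σ) σ := by
    intro σ hσ
    have hz : T σ x ∈ genDom T := hT.mapsTo_genDom hE hσ.1 hx
    refine hS.hasDerivWithinAt_interpolation hT hσ.1 hσ.2 x ?_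
    simpa [hagree _ hz, ← smul_sub] using (hB _ hz).sub (hA _ (hsub hz))
  simpa [hSid, hTid] using (constant_of_has_deriv_right_zero hcont hderiv t ⟨ht, le_rfl⟩).symm

/-- Let `S` and `T` be convex C₀-semigroups on a Banach lattice with order
continuous norm, with generators `A` and `B`. If `B ⊂ A` (i.e. `D(B) ⊆ D(A)` and
`Ax = Bx` on `D(B)`) and `D(B)` is dense in `X`, then `S(t)x = T(t)x` for all `t ≥ 0`
and `x ∈ X`. -/
theorem semigroup_determined_by_generator
    [PosSMulStrictMono ℝ X] [PosSMulReflectLT ℝ X]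
    (hDed : ∀ f : ℕ → X, BddAbove (Set.range f) → ∃ s : X, IsLUB (Set.range f) s)
    (hoc : ∀ f : ℕ → X, Antitone f → IsGLB (Set.range f) 0 →
      Tendsto (fun n => ‖f n‖) atTop (𝓝 (0 : ℝ)))
    (S T : ℝ → X → X)
    (hSconv : ∀ t : ℝ, 0 ≤ t → ∀ x y : X, ∀ a : ℝ, 0 ≤ a → a ≤ 1 →
      S t (a • x + (1 - a) • y) ≤ a • S t x + (1 - a) • S t y)
    (hSbdd : ∀ t : ℝ, 0 ≤ t → ∀ r : ℝ, 0 < r → ∃ M : ℝ, ∀ x : X, ‖x‖ ≤ r → ‖S t x‖ ≤ M)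
    (hSid : ∀ x : X, S 0 x = x)
    (hSsg : ∀ s t : ℝ, 0 ≤ s → 0 ≤ t → ∀ x : X, S (t + s) x = S t (S s x))
    (hSc0 : ∀ x : X, Tendsto (fun t : ℝ => S t x) (𝓝[>] (0 : ℝ)) (𝓝 x))
    (hTconv : ∀ t : ℝ, 0 ≤ t → ∀ x y : X, ∀ a : ℝ, 0 ≤ a → a ≤ 1 →
      T t (a • x + (1 - a) • y) ≤ a • T t x + (1 - a) • T t y)
    (hTbdd : ∀ t : ℝ, 0 ≤ t → ∀ r : ℝ, 0 < r → ∃ M : ℝ, ∀ x : X, ‖x‖ ≤ r → ‖T t x‖ ≤ M)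
    (hTid : ∀ x : X, T 0 x = x)
    (hTsg : ∀ s t : ℝ, 0 ≤ s → 0 ≤ t → ∀ x : X, T (t + s) x = T t (T s x))
    (hTc0 : ∀ x : X, Tendsto (fun t : ℝ => T t x) (𝓝[>] (0 : ℝ)) (𝓝 x))
    (A B : X → X)
    (hA : ∀ x ∈ genDom S, Tendsto (fun h : ℝ => h⁻¹ • (S h x - x)) (𝓝[>] (0 : ℝ)) (𝓝 (A x)))
    (hB : ∀ x ∈ genDom T, Tendsto (fun h : ℝ => h⁻¹ • (T h x - x)) (𝓝[>] (0 : ℝ)) (𝓝 (B x)))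
    (hsub : genDom T ⊆ genDom S)
    (hagree : ∀ x ∈ genDom T, A x = B x)
    (hdense : Dense (genDom T)) :
    ∀ t : ℝ, 0 ≤ t → ∀ x : X, S t x = T t x :=
  semigroup_determined_by_generator_general hDed hoc S T hSconv hSbdd hSid hSsg hSc0 hTconv hTbdd
    hTid hTsg hTc0 A B hA hB hsub hagree hdense
end

section
/- Let X and Y be Banach lattices and let 𝒮 be a family of convex continuous operators X → Y such that sup_{S∈𝒮} ‖S(x)‖ < ∞ for every x ∈ X. Then: (i) there exists r > 0 such that sup_{S∈𝒮} sup_{‖x‖≤r} ‖S(x)‖ < ∞; (ii) for every x₀ ∈ X there exists r > 0 such that sup over all S ∈ 𝒮, all x with ‖x − x₀‖ ≤ r, and all y with ‖y‖ ≤ r of ‖S(x+y) − S(x)‖ is finite. -/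
/-!
By Baire's theorem the sets `{x | ∀ S ∈ 𝒮, ‖S x‖ ≤ n}`, which are closed and cover `X`, are
uniformly bounded on some ball `B(x₁, ρ)`. Convexity transports this bound to any `x₀`: for `x`
near `x₀`, `x` is the midpoint of a point of `B(x₁, ρ)` and the fixed point `2x₀ - x₁`, which
bounds `S x` from above, while the midpoint of `x` and the fixed point `2x₁ - x₀` lies in
`B(x₁, ρ)`, which bounds `S x` from below. In a Banach lattice a two-sided order bound is a
norm bound.
-/

open Set Metric

theorem norm_le_norm_add_norm_of_le_of_le {α : Type*} [NormedAddCommGroup α] [Lattice α]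
    [IsOrderedAddMonoid α] [HasSolidNorm α] {a b c : α} (hab : a ≤ b) (hbc : b ≤ c) :
    ‖b‖ ≤ ‖a‖ + ‖c‖ := by
  have habs : |b| ≤ |(|a| ⊔ |c|)| := by
    rw [abs_of_nonneg (le_sup_of_le_left (abs_nonneg a)), abs_le']
    exact ⟨hbc.trans ((le_abs_self c).trans le_sup_right),
      (neg_le_neg hab).trans ((neg_le_abs a).trans le_sup_left)⟩
  calc ‖b‖ ≤ ‖|a| ⊔ |c|‖ := norm_le_norm_of_abs_le_abs habs
    _ ≤ ‖|a|‖ + ‖|c|‖ := norm_sup_le_add _ _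
    _ = ‖a‖ + ‖c‖ := by rw [norm_abs_eq_norm, norm_abs_eq_norm]

theorem exists_isOpen_nonempty_forall_le_of_continuous {X ι : Type*} [TopologicalSpace X]
    [BaireSpace X] [Nonempty X] {f : ι → X → ℝ} (hf : ∀ i, Continuous (f i))
    (hbdd : ∀ x, ∃ M, ∀ i, f i x ≤ M) :
    ∃ U : Set X, IsOpen U ∧ U.Nonempty ∧ ∃ M : ℝ, ∀ i, ∀ z ∈ U, f i z ≤ M := by
  have hclosed : ∀ n : ℕ, IsClosed {x | ∀ i, f i x ≤ n} := fun n ↦ by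
    simpa only [ofPred_forall] using isClosed_iInter fun i ↦ isClosed_le (hf i) continuous_const
  have hcover : ⋃ n : ℕ, {x | ∀ i, f i x ≤ n} = univ := by
    refine eq_univ_of_forall fun x ↦ mem_iUnion.2 ?_
    obtain ⟨M, hM⟩ := hbdd x
    obtain ⟨n, hn⟩ := exists_nat_ge M
    exact ⟨n, fun i ↦ (hM i).trans hn⟩
  obtain ⟨n, hn⟩ := nonempty_interior_of_iUnion_of_closed hclosed hcover
  exact ⟨_, isOpen_interior, hn, n, fun i z hz ↦ interior_subset hz i⟩

section ConvexOn

variable {X Y : Type*} [SeminormedAddCommGroup X] [NormedSpace ℝ X]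
  [NormedAddCommGroup Y] [Lattice Y] [IsOrderedAddMonoid Y] [HasSolidNorm Y] [NormedSpace ℝ Y]

theorem ConvexOn.norm_le_of_forall_mem_ball_norm_le {S : X → Y} (hS : ConvexOn ℝ univ S)
    {x₁ : X} {ρ M : ℝ} (hM : ∀ z ∈ ball x₁ ρ, ‖S z‖ ≤ M) {x₀ x : X} (hx : x ∈ ball x₀ (ρ / 2)) :
    ‖S x‖ ≤ 2 * M + ‖S ((2 : ℝ) • x₁ - x₀)‖ + (M + ‖S ((2 : ℝ) • x₀ - x₁)‖) / 2 := by
  rw [mem_ball_iff_norm] at hx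
  set p := (2 : ℝ) • x₀ - x₁
  set q := (2 : ℝ) • x₁ - x₀
  set w := x₁ + (2 : ℝ) • (x - x₀)
  set w' := x₁ + (1 / 2 : ℝ) • (x - x₀)
  have hmid : ∀ u v, S ((1 / 2 : ℝ) • u + (1 / 2 : ℝ) • v) ≤ (1 / 2 : ℝ) • S u + (1 / 2 : ℝ) • S v :=
    fun u v ↦ hS.2 trivial trivial (by norm_num) (by norm_num) (by norm_num)
  have hw : ‖S w‖ ≤ M := hM w <| by
    rw [mem_ball_iff_norm, add_sub_cancel_left, norm_smul, Real.norm_two]; linarith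
  have hw' : ‖S w'‖ ≤ M := hM w' <| by
    rw [mem_ball_iff_norm, add_sub_cancel_left, norm_smul, Real.norm_of_nonneg (by norm_num)]
    linarith [norm_nonneg (x - x₀)]
  have hupper : S x ≤ (1 / 2 : ℝ) • S w + (1 / 2 : ℝ) • S p := by
    convert hmid w p using 2; module
  have hlower : (2 : ℝ) • S w' - S q ≤ S x := by
    have h := hmid x q
    rw [show (1 / 2 : ℝ) • x + (1 / 2 : ℝ) • q = w' by module] at h
    calc (2 : ℝ) • S w' - S q = S w' + S w' - S q := by rw [two_smul]
      _ ≤ ((1 / 2 : ℝ) • S x + (1 / 2 : ℝ) • S q) + ((1 / 2 : ℝ) • S x + (1 / 2 : ℝ) • S q) - S q :=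
        sub_le_sub_right (add_le_add h h) _
      _ = S x := by module
  calc ‖S x‖ ≤ ‖(2 : ℝ) • S w' - S q‖ + ‖(1 / 2 : ℝ) • S w + (1 / 2 : ℝ) • S p‖ :=
        norm_le_norm_add_norm_of_le_of_le hlower hupper
    _ ≤ (2 * ‖S w'‖ + ‖S q‖) + (‖S w‖ + ‖S p‖) / 2 := by
        gcongr
        · exact (norm_sub_le _ _).trans (by rw [norm_smul, Real.norm_two])
        · refine (norm_add_le _ _).trans (le_of_eq ?_)
          rw [norm_smul, norm_smul, Real.norm_of_nonneg (by norm_num : (0 : ℝ) ≤ 1 / 2)]; ring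
    _ ≤ 2 * M + ‖S q‖ + (M + ‖S p‖) / 2 := by linarith

theorem exists_pos_forall_mem_closedBall_norm_le_of_convexOn {ι : Type*} {S : ι → X → Y}
    (hS : ∀ i, ConvexOn ℝ univ (S i)) (hpt : ∀ x, ∃ M, ∀ i, ‖S i x‖ ≤ M) {x₁ : X} {ρ M : ℝ}
    (hρ : 0 < ρ) (hM : ∀ i, ∀ z ∈ ball x₁ ρ, ‖S i z‖ ≤ M) (x₀ : X) :
    ∃ r > 0, ∃ M', ∀ i, ∀ x ∈ closedBall x₀ r, ‖S i x‖ ≤ M' := by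
  obtain ⟨Mq, hMq⟩ := hpt ((2 : ℝ) • x₁ - x₀)
  obtain ⟨Mp, hMp⟩ := hpt ((2 : ℝ) • x₀ - x₁)
  refine ⟨ρ / 4, by positivity, 2 * M + Mq + (M + Mp) / 2, fun i x hx ↦ ?_⟩
  have hx' : x ∈ ball x₀ (ρ / 2) := closedBall_subset_ball (by linarith) hx
  linarith [(hS i).norm_le_of_forall_mem_ball_norm_le (hM i) hx', hMq i, hMp i]

end ConvexOn

theorem convex_uniform_boundedness_general
    {X : Type*} [NormedAddCommGroup X]
    [NormedSpace ℝ X] [CompleteSpace X]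
    {Y : Type*} [NormedAddCommGroup Y] [Lattice Y] [IsOrderedAddMonoid Y] [HasSolidNorm Y]
    [NormedSpace ℝ Y]
    {ι : Type*} (𝒮 : ι → X → Y)
    (hconv : ∀ i : ι, ∀ x y : X, ∀ a : ℝ, 0 ≤ a → a ≤ 1 →
      𝒮 i (a • x + (1 - a) • y) ≤ a • 𝒮 i x + (1 - a) • 𝒮 i y)
    (hcont : ∀ i : ι, Continuous (𝒮 i))
    (hptbdd : ∀ x : X, ∃ M : ℝ, ∀ i : ι, ‖𝒮 i x‖ ≤ M) :
    (∃ r : ℝ, 0 < r ∧ ∃ M : ℝ, ∀ i : ι, ∀ x : X, ‖x‖ ≤ r → ‖𝒮 i x‖ ≤ M) ∧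
    (∀ x₀ : X, ∃ r : ℝ, 0 < r ∧ ∃ M : ℝ, ∀ i : ι, ∀ x y : X,
      ‖x - x₀‖ ≤ r → ‖y‖ ≤ r → ‖𝒮 i (x + y) - 𝒮 i x‖ ≤ M) := by
  have hconvOn : ∀ i, ConvexOn ℝ univ (𝒮 i) := fun i ↦ ⟨convex_univ, fun x _ y _ a b ha hb hab ↦ by
    obtain rfl : b = 1 - a := by linarith
    exact hconv i x y a ha (by linarith)⟩
  obtain ⟨U, hU, ⟨x₁, hx₁⟩, M, hM⟩ :=
    exists_isOpen_nonempty_forall_le_of_continuous (fun i ↦ (hcont i).norm) hptbdd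
  obtain ⟨ρ, hρ, hball⟩ := Metric.isOpen_iff.1 hU x₁ hx₁
  have hlocal := exists_pos_forall_mem_closedBall_norm_le_of_convexOn hconvOn hptbdd hρ
    fun i z hz ↦ hM i z (hball hz)
  refine ⟨?_, fun x₀ ↦ ?_⟩
  · obtain ⟨r, hr, M', hM'⟩ := hlocal 0
    exact ⟨r, hr, M', fun i x hx ↦ hM' i x (mem_closedBall_zero_iff.2 hx)⟩
  · obtain ⟨r, hr, M', hM'⟩ := hlocal x₀
    refine ⟨r / 2, by positivity, 2 * M', fun i x y hx hy ↦ ?_⟩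
    have hxy : x + y ∈ closedBall x₀ r := by
      rw [mem_closedBall_iff_norm, add_sub_right_comm]
      linarith [norm_add_le (x - x₀) y]
    have hx' : x ∈ closedBall x₀ r := mem_closedBall_iff_norm.2 (by linarith)
    linarith [norm_sub_le (𝒮 i (x + y)) (𝒮 i x), hM' i _ hxy, hM' i _ hx']

/-- Uniform boundedness principle for families of convex continuous
operators between Banach lattices: if `sup_{S∈𝒮} ‖S(x)‖ < ∞` for every `x`, then
(i) the family is uniformly bounded on some ball `B(0,r)`, and (ii) around every point
`x₀` the increments `S(x+y) − S(x)` are uniformly bounded for `x ∈ B(x₀,r)`,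
`y ∈ B(0,r)` for some `r > 0`. -/
theorem convex_uniform_boundedness
    {X : Type*} [NormedAddCommGroup X] [Lattice X] [IsOrderedAddMonoid X] [HasSolidNorm X]
    [NormedSpace ℝ X] [CompleteSpace X]
    [PosSMulStrictMono ℝ X] [PosSMulReflectLT ℝ X]
    {Y : Type*} [NormedAddCommGroup Y] [Lattice Y] [IsOrderedAddMonoid Y] [HasSolidNorm Y]
    [NormedSpace ℝ Y] [CompleteSpace Y]
    [PosSMulStrictMono ℝ Y] [PosSMulReflectLT ℝ Y]
    {ι : Type*} (𝒮 : ι → X → Y)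
    (hconv : ∀ i : ι, ∀ x y : X, ∀ a : ℝ, 0 ≤ a → a ≤ 1 →
      𝒮 i (a • x + (1 - a) • y) ≤ a • 𝒮 i x + (1 - a) • 𝒮 i y)
    (hcont : ∀ i : ι, Continuous (𝒮 i))
    (hptbdd : ∀ x : X, ∃ M : ℝ, ∀ i : ι, ‖𝒮 i x‖ ≤ M) :
    (∃ r : ℝ, 0 < r ∧ ∃ M : ℝ, ∀ i : ι, ∀ x : X, ‖x‖ ≤ r → ‖𝒮 i x‖ ≤ M) ∧
    (∀ x₀ : X, ∃ r : ℝ, 0 < r ∧ ∃ M : ℝ, ∀ i : ι, ∀ x y : X,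
      ‖x - x₀‖ ≤ r → ‖y‖ ≤ r → ‖𝒮 i (x + y) - 𝒮 i x‖ ≤ M) :=
  convex_uniform_boundedness_general 𝒮 hconv hcont hptbdd
end
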